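/- arXiv:1212.6211 — 2 statements merged into one kernel-verified Lean document; each statement's English description precedes it below -/
import Mathlib

section
/- For each fixed N ≥ 2 and s > 0, if ω_{N,s} is an N-point s-energy minimizing configuration on a compact infinite metric space (A, ρ), then η(ω_{N,s}, A) ≤ N^{2/s} · δ(ω_{N,s}). -/
/-!
Let `x` minimise the Riesz `s`-energy, let `x j, x k` be a closest pair, `δ = dist (x j) (x k)`,
and let `U_j` be the `s`-potential of the other `N - 1` points. Moving `x j` to a point `y` changes
the energy by `2 (U_j(y) - U_j(x j))`, so minimality gives `U_j(x j) ≤ U_j(y)`. Since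
`U_j(x j) ≥ δ^{-s}` while `U_j(y) ≤ (N - 1) dist(y, x)^{-s}`, every point lies within
`(N - 1)^{1/s} δ ≤ N^{2/s} δ` of the configuration.
-/

open scoped BigOperators
open Filter Metric

/-- Separation distance of an `N`-point configuration. -/
noncomputable def sep {E : Type*} [MetricSpace E] {N : ℕ} (x : Fin N → E) : ℝ :=
  ⨅ p : {p : Fin N × Fin N // p.1 ≠ p.2}, dist (x p.1.1) (x p.1.2)

/-- Mesh norm (covering radius) of a configuration relative to a set `S`. -/
noncomputable def mesh {E : Type*} [MetricSpace E] {N : ℕ} (S : Set E) (x : Fin N → E) : ℝ :=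
  ⨆ y : S, ⨅ i, dist (y : E) (x i)

/-- `N`-point best-packing distance of the set `S`. -/
noncomputable def packDist {E : Type*} [MetricSpace E] (S : Set E) (N : ℕ) : ℝ :=
  ⨆ x : {x : Fin N → E // Function.Injective x ∧ ∀ i, x i ∈ S}, sep x.1

/-- Riesz `s`-energy of a configuration. -/
noncomputable def energy {E : Type*} [MetricSpace E] {N : ℕ} (s : ℝ) (x : Fin N → E) : ℝ :=
  ∑ i, ∑ j ∈ Finset.univ.filter (· ≠ i), dist (x i) (x j) ^ (-s)

/-- Minimal `N`-point Riesz `s`-energy of the set `S`. -/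
noncomputable def minEnergy {E : Type*} [MetricSpace E] (S : Set E) (N : ℕ) (s : ℝ) : ℝ :=
  ⨅ x : {x : Fin N → E // Function.Injective x ∧ ∀ i, x i ∈ S}, energy s x.1

open Finset Function

theorem injective_update_of_notMem_range {α β : Type*} [DecidableEq α] {x : α → β}
    (hx : Injective x) {y : β} (hy : y ∉ Set.range x) (j : α) : Injective (update x j y) := by
  intro a b hab
  by_cases ha : a = j <;> by_cases hb : b = j
  · rw [ha, hb]
  · subst ha
    rw [update_self, update_of_ne hb] at hab
    exact absurd ⟨b, hab.symm⟩ hy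
  · subst hb
    rw [update_self, update_of_ne ha] at hab
    exact absurd ⟨a, hab⟩ hy
  · rw [update_of_ne ha, update_of_ne hb] at hab
    exact hx hab

section

variable {E : Type*} [MetricSpace E] {N : ℕ}

theorem exists_sep_eq_dist (x : Fin N → E) (hN : 1 < N) :
    ∃ j k, j ≠ k ∧ sep x = dist (x j) (x k) := by
  have : Nonempty {p : Fin N × Fin N // p.1 ≠ p.2} :=
    ⟨⟨(⟨0, by omega⟩, ⟨1, hN⟩), by simp [Fin.ext_iff]⟩⟩
  obtain ⟨⟨⟨j, k⟩, hjk⟩, h⟩ :=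
    exists_eq_ciInf_of_finite (f := fun p : {p : Fin N × Fin N // p.1 ≠ p.2} ↦
      dist (x p.1.1) (x p.1.2))
  exact ⟨j, k, hjk, h.symm⟩

theorem sep_nonneg (x : Fin N → E) : 0 ≤ sep x :=
  Real.iInf_nonneg fun _ ↦ dist_nonneg

theorem mesh_le {S : Set E} {x : Fin N → E} {c : ℝ} (hS : S.Nonempty)
    (h : ∀ y ∈ S, ∃ i, dist y (x i) ≤ c) : mesh S x ≤ c := by
  have : Nonempty S := hS.to_subtype
  refine ciSup_le fun ⟨y, hy⟩ ↦ ?_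
  obtain ⟨i, hi⟩ := h y hy
  exact ciInf_le_of_le ⟨0, by rintro _ ⟨i, rfl⟩; exact dist_nonneg⟩ i hi

theorem energy_nonneg (s : ℝ) (x : Fin N → E) : 0 ≤ energy s x :=
  sum_nonneg fun _ _ ↦ sum_nonneg fun _ _ ↦ Real.rpow_nonneg dist_nonneg _

theorem energy_le_of_eq_minEnergy {S : Set E} {s : ℝ} {x z : Fin N → E}
    (hmin : energy s x = minEnergy S N s) (hz : Injective z) (hzS : ∀ i, z i ∈ S) :
    energy s x ≤ energy s z := by
  rw [hmin]
  have hbdd : BddBelow (Set.range fun w : {w : Fin N → E // Injective w ∧ ∀ i, w i ∈ S} ↦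
      energy s w.1) := ⟨0, by rintro _ ⟨w, rfl⟩; exact energy_nonneg s w.1⟩
  exact ciInf_le hbdd ⟨z, hz, hzS⟩

noncomputable def rieszPotential (s : ℝ) (x : Fin N → E) (j : Fin N) (y : E) : ℝ :=
  ∑ i ∈ univ.erase j, dist y (x i) ^ (-s)

theorem energy_eq_sum_erase_add_rieszPotential (s : ℝ) (x : Fin N → E) (j : Fin N) :
    energy s x = (∑ i ∈ univ.erase j, ∑ l ∈ (univ.erase j).erase i, dist (x i) (x l) ^ (-s)) +
      2 * rieszPotential s x j (x j) := by
  have hrow : ∀ i ∈ univ.erase j, ∑ l ∈ univ.erase i, dist (x i) (x l) ^ (-s) =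
      dist (x j) (x i) ^ (-s) + ∑ l ∈ (univ.erase j).erase i, dist (x i) (x l) ^ (-s) := by
    intro i hi
    rw [← add_sum_erase _ _ (mem_erase.2 ⟨(ne_of_mem_erase hi).symm, mem_univ j⟩),
      dist_comm, erase_right_comm]
  simp only [energy, filter_ne', rieszPotential]
  rw [← sum_erase_add _ _ (mem_univ j), sum_congr rfl hrow, sum_add_distrib]
  ring

theorem energy_update (s : ℝ) (x : Fin N → E) (j : Fin N) (y : E) :
    energy s (update x j y) =
      energy s x + 2 * (rieszPotential s x j y - rieszPotential s x j (x j)) := by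
  have hrest : ∀ i ∈ univ.erase j, update x j y i = x i :=
    fun i hi ↦ update_of_ne (ne_of_mem_erase hi) _ _
  have hpot : rieszPotential s (update x j y) j (update x j y j) = rieszPotential s x j y := by
    simp only [rieszPotential, update_self]
    exact sum_congr rfl fun i hi ↦ by rw [hrest i hi]
  rw [energy_eq_sum_erase_add_rieszPotential s x j,
    energy_eq_sum_erase_add_rieszPotential s (update x j y) j, hpot]
  have hsum : ∀ i ∈ univ.erase j, ∑ l ∈ (univ.erase j).erase i,
      dist (update x j y i) (update x j y l) ^ (-s) =
      ∑ l ∈ (univ.erase j).erase i, dist (x i) (x l) ^ (-s) :=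
    fun i hi ↦ sum_congr rfl fun l hl ↦ by rw [hrest i hi, hrest l (mem_of_mem_erase hl)]
  rw [sum_congr rfl hsum]
  ring

section Minimizer

variable {S : Set E} {s : ℝ} {x : Fin N → E}

theorem rieszPotential_le_of_eq_minEnergy (hmin : energy s x = minEnergy S N s)
    (hx : Injective x) (hxS : ∀ i, x i ∈ S) {y : E} (hy : y ∈ S) (hyx : y ∉ Set.range x)
    (j : Fin N) : rieszPotential s x j (x j) ≤ rieszPotential s x j y := by
  have hupdS : ∀ i, update x j y i ∈ S := fun i ↦ by
    rcases eq_or_ne i j with rfl | hi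
    · rwa [update_self]
    · rw [update_of_ne hi]; exact hxS i
  have := energy_le_of_eq_minEnergy hmin (injective_update_of_notMem_range hx hyx j) hupdS
  rw [energy_update] at this
  linarith

theorem rpow_neg_sep_le_rieszPotential {j k : Fin N} (hjk : j ≠ k)
    (hsep : sep x = dist (x j) (x k)) (s : ℝ) : sep x ^ (-s) ≤ rieszPotential s x j (x j) := by
  rw [hsep]
  exact single_le_sum (f := fun i ↦ dist (x j) (x i) ^ (-s))
    (fun _ _ ↦ Real.rpow_nonneg dist_nonneg _) (mem_erase.2 ⟨hjk.symm, mem_univ k⟩)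

theorem rieszPotential_lt (hN : 1 < N) (hs : 0 < s) (j : Fin N) {y : E} {c : ℝ} (hc : 0 < c)
    (hy : ∀ i, c < dist y (x i)) : rieszPotential s x j y < (N - 1) * c ^ (-s) := by
  have hne : (univ.erase j).Nonempty := by
    rw [← card_pos, card_erase_of_mem (mem_univ j), card_univ, Fintype.card_fin]
    omega
  calc rieszPotential s x j y < ∑ _i ∈ univ.erase j, c ^ (-s) :=
        sum_lt_sum_of_nonempty hne fun i _ ↦ Real.rpow_lt_rpow_of_neg hc (hy i) (by linarith)
    _ = (N - 1) * c ^ (-s) := by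
        rw [sum_const, card_erase_of_mem (mem_univ j), card_univ, Fintype.card_fin, nsmul_eq_mul,
          Nat.cast_sub hN.le, Nat.cast_one]

theorem exists_dist_le_of_eq_minEnergy (hN : 1 < N) (hs : 0 < s) (hx : Injective x)
    (hxS : ∀ i, x i ∈ S) (hmin : energy s x = minEnergy S N s) {y : E} (hy : y ∈ S) :
    ∃ i, dist y (x i) ≤ ((N : ℝ) - 1) ^ s⁻¹ * sep x := by
  by_contra! hfar
  obtain ⟨j, k, hjk, hsep⟩ := exists_sep_eq_dist x hN
  have hsep_pos : 0 < sep x := hsep ▸ dist_pos.2 (hx.ne hjk)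
  have hN1 : (0 : ℝ) < N - 1 := by
    rw [sub_pos]; exact_mod_cast hN
  set c := ((N : ℝ) - 1) ^ s⁻¹ * sep x
  have hc : 0 < c := mul_pos (Real.rpow_pos_of_pos hN1 _) hsep_pos
  have hyx : y ∉ Set.range x := by
    rintro ⟨i, rfl⟩
    simpa using hc.trans (hfar i)
  -- `c` is chosen so that `N - 1` points at distance `c` have potential exactly `sep x ^ (-s)`.
  have hcs : ((N : ℝ) - 1) * c ^ (-s) = sep x ^ (-s) := by
    rw [Real.mul_rpow (Real.rpow_nonneg hN1.le _) hsep_pos.le, ← Real.rpow_mul hN1.le,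
      inv_mul_eq_div, neg_div, div_self hs.ne', Real.rpow_neg_one, ← mul_assoc,
      mul_inv_cancel₀ hN1.ne', one_mul]
  have : sep x ^ (-s) < sep x ^ (-s) :=
    calc sep x ^ (-s) ≤ rieszPotential s x j (x j) := rpow_neg_sep_le_rieszPotential hjk hsep s
      _ ≤ rieszPotential s x j y := rieszPotential_le_of_eq_minEnergy hmin hx hxS hy hyx j
      _ < ((N : ℝ) - 1) * c ^ (-s) := rieszPotential_lt hN hs j hc hfar
      _ = sep x ^ (-s) := hcs
  exact lt_irrefl _ this

end Minimizer

end

theorem stmt_4_general {A : Type*} [MetricSpace A]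
    (N : ℕ) (hN : 2 ≤ N) (s : ℝ) (hs : 0 < s) (x : Fin N → A) (hx : Function.Injective x)
    (hmin : energy s x = minEnergy (Set.univ : Set A) N s) :
    mesh (Set.univ : Set A) x ≤ (N : ℝ) ^ (2 / s) * sep x := by
  have hN1 : (1 : ℝ) ≤ N := by exact_mod_cast (by omega : 1 ≤ N)
  have hfactor : ((N : ℝ) - 1) ^ s⁻¹ ≤ (N : ℝ) ^ (2 / s) :=
    calc ((N : ℝ) - 1) ^ s⁻¹ ≤ (N : ℝ) ^ s⁻¹ :=
          Real.rpow_le_rpow (by linarith) (by linarith) (inv_nonneg.2 hs.le)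
      _ ≤ (N : ℝ) ^ (2 / s) :=
          Real.rpow_le_rpow_of_exponent_le hN1 (by rw [div_eq_mul_inv]; linarith [inv_pos.2 hs])
  calc mesh Set.univ x ≤ ((N : ℝ) - 1) ^ s⁻¹ * sep x :=
        mesh_le ⟨x ⟨0, by omega⟩, trivial⟩ fun y hy ↦
          exists_dist_le_of_eq_minEnergy hN hs hx (fun i ↦ Set.mem_univ (x i)) hmin hy
    _ ≤ (N : ℝ) ^ (2 / s) * sep x :=
        mul_le_mul_of_nonneg_right hfactor (sep_nonneg x)

theorem stmt_4 {A : Type*} [MetricSpace A] [CompactSpace A] [Infinite A]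
    (N : ℕ) (hN : 2 ≤ N) (s : ℝ) (hs : 0 < s) (x : Fin N → A) (hx : Function.Injective x)
    (hmin : energy s x = minEnergy (Set.univ : Set A) N s) :
    mesh (Set.univ : Set A) x ≤ (N : ℝ) ^ (2 / s) * sep x :=
  stmt_4_general N hN s hs x hx hmin
end

section
/- For each fixed N ≥ 2 on a compact infinite metric space (A, ρ), lim_{s→∞} E_s(A, N)^{1/s} = 1/δ_N(A), where E_s(A,N) is the minimal N-point Riesz s-energy of A and δ_N(A) is the N-point best-packing distance. -/
open scoped BigOperators
open Filter Metric

/-! A best packing exists by compactness, and its separation `δ = packDist` controls every energy: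
each configuration has a pair at distance at most `δ`, so `δ ^ (-s) ≤ minEnergy`, while the best
packing itself has energy at most `N ^ 2 * δ ^ (-s)`. Taking `s`-th roots, `N ^ (2 / s) → 1`. -/

section

variable {E : Type*} [MetricSpace E] {N : ℕ}

abbrev Configuration (S : Set E) (N : ℕ) : Type _ :=
  {x : Fin N → E // Function.Injective x ∧ ∀ i, x i ∈ S}

lemma sep_le_dist (x : Fin N → E) {i j : Fin N} (hij : i ≠ j) : sep x ≤ dist (x i) (x j) :=
  ciInf_le (f := fun p : {p : Fin N × Fin N // p.1 ≠ p.2} => dist (x p.1.1) (x p.1.2))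
    ⟨0, Set.forall_mem_range.2 fun _ => dist_nonneg⟩ ⟨(i, j), hij⟩

lemma nonempty_offDiag_fin (hN : 2 ≤ N) : Nonempty {p : Fin N × Fin N // p.1 ≠ p.2} :=
  ⟨⟨(⟨0, by omega⟩, ⟨1, by omega⟩), by simp [Fin.ext_iff]⟩⟩

lemma exists_dist_eq_sep (hN : 2 ≤ N) (x : Fin N → E) :
    ∃ i j, i ≠ j ∧ dist (x i) (x j) = sep x := by
  have := nonempty_offDiag_fin hN
  obtain ⟨⟨⟨i, j⟩, hij⟩, h⟩ := exists_eq_ciInf_of_finite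
    (f := fun p : {p : Fin N × Fin N // p.1 ≠ p.2} => dist (x p.1.1) (x p.1.2))
  exact ⟨i, j, hij, h⟩

lemma sep_pos (hN : 2 ≤ N) {x : Fin N → E} (hx : Function.Injective x) : 0 < sep x := by
  obtain ⟨i, j, hij, h⟩ := exists_dist_eq_sep hN x
  exact h ▸ dist_pos.2 (hx.ne hij)

lemma continuous_sep (hN : 2 ≤ N) : Continuous (sep : (Fin N → E) → ℝ) := by
  have := nonempty_offDiag_fin hN
  have hsep : (sep : (Fin N → E) → ℝ) = fun x => Finset.univ.inf' Finset.univ_nonempty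
      fun p : {p : Fin N × Fin N // p.1 ≠ p.2} => dist (x p.1.1) (x p.1.2) :=
    funext fun x => (Finset.inf'_univ_eq_ciInf _).symm
  rw [hsep]
  exact Continuous.finset_inf'_apply _ fun p _ => (continuous_apply _).dist (continuous_apply _)

/-- Maximising `sep` over all of `S ^ N` gives an injective configuration, since `sep` vanishes
on configurations with a repeated point. -/
lemma exists_configuration_isMax_sep {S : Set E} (hS : IsCompact S) (hN : 2 ≤ N)
    [Nonempty (Configuration S N)] :
    ∃ x : Configuration S N, ∀ y : Configuration S N, sep y.1 ≤ sep x.1 := by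
  obtain ⟨y₀⟩ := ‹Nonempty (Configuration S N)›
  obtain ⟨x, hxS, hmax⟩ := (isCompact_univ_pi fun _ : Fin N => hS).exists_isMaxOn
    ⟨y₀.1, fun i _ => y₀.2.2 i⟩ (continuous_sep hN).continuousOn
  have hmax : ∀ y : Fin N → E, (∀ i, y i ∈ S) → sep y ≤ sep x :=
    fun y hy => hmax fun i _ => hy i
  have hpos : 0 < sep x := (sep_pos hN y₀.2.1).trans_le (hmax _ y₀.2.2)
  have hinj : Function.Injective x := fun i j hxij => by
    by_contra hij
    have := sep_le_dist x hij
    rw [hxij, dist_self] at this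
    linarith
  exact ⟨⟨x, hinj, fun i => hxS i trivial⟩, fun y => hmax y.1 y.2.2⟩

lemma exists_configuration_sep_eq_packDist {S : Set E} (hS : IsCompact S) (hN : 2 ≤ N)
    [Nonempty (Configuration S N)] :
    ∃ x : Configuration S N, sep x.1 = packDist S N ∧ ∀ y : Configuration S N,
      sep y.1 ≤ packDist S N := by
  obtain ⟨x, hx⟩ := exists_configuration_isMax_sep hS hN
  have hδ : sep x.1 = packDist S N :=
    le_antisymm (le_ciSup ⟨sep x.1, by rintro _ ⟨y, rfl⟩; exact hx y⟩ x) (ciSup_le hx)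
  exact ⟨x, hδ, hδ ▸ hx⟩

lemma rpow_neg_dist_le_energy (s : ℝ) (x : Fin N → E) {i j : Fin N} (hij : i ≠ j) :
    dist (x i) (x j) ^ (-s) ≤ energy s x := by
  have hterm : ∀ i j : Fin N, 0 ≤ dist (x i) (x j) ^ (-s) := fun _ _ =>
    Real.rpow_nonneg dist_nonneg _
  calc dist (x i) (x j) ^ (-s)
      ≤ ∑ k ∈ Finset.univ.filter (· ≠ i), dist (x i) (x k) ^ (-s) :=
        Finset.single_le_sum (f := fun k => dist (x i) (x k) ^ (-s)) (fun k _ => hterm i k)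
          (by simp [hij.symm])
    _ ≤ energy s x :=
        Finset.single_le_sum (f := fun i => ∑ k ∈ Finset.univ.filter (· ≠ i), dist (x i) (x k) ^ (-s))
          (fun _ _ => Finset.sum_nonneg fun _ _ => hterm _ _) (Finset.mem_univ i)

lemma energy_le_sq_mul_sep_rpow_neg (hN : 2 ≤ N) {x : Fin N → E} (hx : Function.Injective x)
    {s : ℝ} (hs : 0 ≤ s) : energy s x ≤ (N : ℝ) ^ 2 * sep x ^ (-s) := by
  have hterm : ∀ i, ∀ j ∈ Finset.univ.filter (· ≠ i), dist (x i) (x j) ^ (-s) ≤ sep x ^ (-s) :=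
    fun i j hj => Real.rpow_le_rpow_of_nonpos (sep_pos hN hx)
      (sep_le_dist x (Finset.mem_filter.1 hj).2.symm) (neg_nonpos.2 hs)
  calc energy s x ≤ ∑ _i : Fin N, (N : ℝ) * sep x ^ (-s) := by
        refine Finset.sum_le_sum fun i _ => (Finset.sum_le_card_nsmul _ _ _ (hterm i)).trans ?_
        rw [nsmul_eq_mul]
        gcongr
        · exact Real.rpow_nonneg (sep_pos hN hx).le _
        · exact_mod_cast (Finset.card_filter_le _ _).trans_eq (Finset.card_fin N)
    _ = (N : ℝ) ^ 2 * sep x ^ (-s) := by simp [sq, mul_assoc]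

variable {S : Set E} (hS : IsCompact S) (hN : 2 ≤ N) [Nonempty (Configuration S N)]
include hS hN

lemma packDist_pos : 0 < packDist S N := by
  obtain ⟨x, hx, -⟩ := exists_configuration_sep_eq_packDist hS hN
  exact hx ▸ sep_pos hN x.2.1

lemma rpow_neg_packDist_le_minEnergy {s : ℝ} (hs : 0 ≤ s) :
    packDist S N ^ (-s) ≤ minEnergy S N s := by
  obtain ⟨-, -, hδ⟩ := exists_configuration_sep_eq_packDist hS hN
  refine le_ciInf fun y => ?_
  obtain ⟨i, j, hij, h⟩ := exists_dist_eq_sep hN y.1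
  calc packDist S N ^ (-s) ≤ dist (y.1 i) (y.1 j) ^ (-s) :=
        Real.rpow_le_rpow_of_nonpos (dist_pos.2 (y.2.1.ne hij)) (h ▸ hδ y) (neg_nonpos.2 hs)
    _ ≤ energy s y.1 := rpow_neg_dist_le_energy s y.1 hij

lemma minEnergy_le_sq_mul_rpow_neg_packDist {s : ℝ} (hs : 0 ≤ s) :
    minEnergy S N s ≤ (N : ℝ) ^ 2 * packDist S N ^ (-s) := by
  obtain ⟨x, hx, -⟩ := exists_configuration_sep_eq_packDist hS hN
  calc minEnergy S N s ≤ energy s x.1 :=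
        ciInf_le ⟨0, by
          rintro _ ⟨y, rfl⟩
          exact Finset.sum_nonneg fun _ _ => Finset.sum_nonneg fun _ _ =>
            Real.rpow_nonneg dist_nonneg _⟩ x
    _ ≤ (N : ℝ) ^ 2 * packDist S N ^ (-s) := hx ▸ energy_le_sq_mul_sep_rpow_neg hN x.2.1 hs

end

lemma tendsto_rpow_one_div_of_rpow_neg_le_of_le_mul_rpow_neg {f : ℝ → ℝ} {δ C : ℝ}
    (hδ : 0 < δ) (hC : 0 < C) (hlo : ∀ s, 0 ≤ s → δ ^ (-s) ≤ f s)
    (hhi : ∀ s, 0 ≤ s → f s ≤ C * δ ^ (-s)) :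
    Tendsto (fun s => f s ^ (1 / s)) atTop (nhds (1 / δ)) := by
  have hroot : ∀ s : ℝ, 0 < s → (δ ^ (-s)) ^ (1 / s) = 1 / δ := fun s hs => by
    rw [← Real.rpow_mul hδ.le, show -s * (1 / s) = -1 by field_simp, Real.rpow_neg_one, one_div]
  have hC_root : Tendsto (fun s : ℝ => C ^ (1 / s)) atTop (nhds 1) := by
    simpa only [Real.rpow_zero, one_div, Function.comp_def] using
      ((Real.continuousAt_const_rpow hC.ne').tendsto).comp tendsto_inv_atTop_zero
  refine tendsto_of_tendsto_of_tendsto_of_le_of_le' tendsto_const_nhds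
    (by simpa only [one_mul] using hC_root.mul_const (1 / δ)) ?_ ?_
  all_goals filter_upwards [eventually_gt_atTop 0] with s hs
  · rw [← hroot s hs]
    exact Real.rpow_le_rpow (Real.rpow_nonneg hδ.le _) (hlo s hs.le) (by positivity)
  · rw [← hroot s hs, ← Real.mul_rpow hC.le (Real.rpow_nonneg hδ.le _)]
    exact Real.rpow_le_rpow ((Real.rpow_nonneg hδ.le _).trans (hlo s hs.le)) (hhi s hs.le)
      (by positivity)

lemma tendsto_minEnergy_rpow_one_div {E : Type*} [MetricSpace E] {S : Set E} {N : ℕ}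
    (hS : IsCompact S) (hN : 2 ≤ N) [Nonempty (Configuration S N)] :
    Tendsto (fun s => minEnergy S N s ^ (1 / s)) atTop (nhds (1 / packDist S N)) :=
  tendsto_rpow_one_div_of_rpow_neg_le_of_le_mul_rpow_neg (packDist_pos hS hN)
    (pow_pos (Nat.cast_pos.2 (by omega)) 2)
    (fun _ => rpow_neg_packDist_le_minEnergy hS hN)
    (fun _ => minEnergy_le_sq_mul_rpow_neg_packDist hS hN)

theorem stmt_6 {A : Type*} [MetricSpace A] [CompactSpace A] [Infinite A]
    (N : ℕ) (hN : 2 ≤ N) :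
    Filter.Tendsto (fun s : ℝ => (minEnergy (Set.univ : Set A) N s) ^ (1 / s))
      Filter.atTop (nhds (1 / packDist (Set.univ : Set A) N)) := by
  have : Nonempty (Configuration (Set.univ : Set A) N) :=
    ⟨⟨fun i => Infinite.natEmbedding A i, (Infinite.natEmbedding A).injective.comp Fin.val_injective,
      fun _ => trivial⟩⟩
  exact tendsto_minEnergy_rpow_one_div isCompact_univ hN
end
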